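/- For all integers n and k with 1 ≤ k ≤ n−1, the polynomial N₂(q) = (1−q^k)·(1−q^{n−k})·((1+q^n)(1+q³) − q(1+q)(q^k+q^{n−k}))·[n choose k]_q ∈ ℤ[q] is divisible in ℤ[q] by D₂(q) = (1−q)²(1−q²)², and the quotient polynomial P(q) = N₂(q)/D₂(q) has nonnegative coefficients. -/

import Mathlib

/-!
Write `k = i + 1`, `n - k = j + 1` and `F = (1 - q^k)(1 - q^(n-k)) [n choose k]_q`. The absorption
identities of Gaussian binomials give `F = (1 - q^n)(1 - q^(n-1)) [n-2 choose k-1]_q`, and with it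
`D₂` times each of the three terms
`[k+1 choose 2] [n-k+1 choose 2] [n choose k]`, `q³ [n choose 2] [n-2 choose 2] [n-4 choose k-2]`,
`qⁿ [n choose 2] [n-2 choose k-1]`
is `F` times `(1 - q^(k+1))(1 - q^(n-k+1))`, `q³ (1 - q^(k-1))(1 - q^(n-k-1))`, `qⁿ (1 - q)(1 - q²)`
respectively. These three sum to the middle factor of `N₂`, so `P` is the sum of the three terms,
which have nonnegative coefficients by the `q`-Pascal rule.
-/

open Polynomial Finset

theorem Polynomial.one_sub_X_pow_ne_zero {R : Type*} [Ring R] [Nontrivial R] {n : ℕ} (hn : n ≠ 0) :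
    (1 - X ^ n : R[X]) ≠ 0 := by
  rw [← neg_sub, neg_ne_zero, ← C_1]
  exact X_pow_sub_C_ne_zero (Nat.pos_of_ne_zero hn) 1

/-- `qBinom a b` is the Gaussian binomial coefficient `[a + b choose a]_q`, indexed by the
sides of the `a × b` box so that the `q`-Pascal rule needs no subtraction. -/
noncomputable def qBinom : ℕ → ℕ → ℤ[X]
  | 0, _ => 1
  | _ + 1, 0 => 1
  | a + 1, b + 1 => qBinom a (b + 1) + X ^ (a + 1) * qBinom (a + 1) b

@[simp] theorem qBinom_zero_left (b : ℕ) : qBinom 0 b = 1 := by rw [qBinom]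

@[simp] theorem qBinom_zero_right (a : ℕ) : qBinom a 0 = 1 := by cases a <;> rw [qBinom]

theorem qBinom_succ_succ (a b : ℕ) :
    qBinom (a + 1) (b + 1) = qBinom a (b + 1) + X ^ (a + 1) * qBinom (a + 1) b := by
  rw [qBinom]

noncomputable abbrev natCoeffPolys : Subsemiring ℤ[X] := (mapRingHom (Nat.castRingHom ℤ)).rangeS

theorem coeff_nonneg_of_mem_natCoeffPolys {p : ℤ[X]} (hp : p ∈ natCoeffPolys) (i : ℕ) :
    0 ≤ p.coeff i := by
  obtain ⟨p, rfl⟩ := hp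
  simp

theorem X_mem_natCoeffPolys : (X : ℤ[X]) ∈ natCoeffPolys := ⟨X, map_X _⟩

theorem qBinom_mem_natCoeffPolys : ∀ a b : ℕ, qBinom a b ∈ natCoeffPolys
  | 0, b => by simp
  | a + 1, 0 => by simp
  | a + 1, b + 1 => qBinom_succ_succ a b ▸ add_mem (qBinom_mem_natCoeffPolys a (b + 1))
      (mul_mem (pow_mem X_mem_natCoeffPolys _) (qBinom_mem_natCoeffPolys (a + 1) b))

/-- `qPochhammer b a = (q^(b+1); q)_a = (1 - q^(b+1)) ⋯ (1 - q^(b+a))`. -/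
noncomputable def qPochhammer (b a : ℕ) : ℤ[X] := ∏ t ∈ range a, (1 - X ^ (b + 1 + t))

theorem qPochhammer_succ (b a : ℕ) :
    qPochhammer b (a + 1) = qPochhammer b a * (1 - X ^ (b + a + 1)) := by
  rw [qPochhammer, prod_range_succ, qPochhammer, add_right_comm]

theorem qPochhammer_succ' (b a : ℕ) :
    qPochhammer b (a + 1) = (1 - X ^ (b + 1)) * qPochhammer (b + 1) a := by
  rw [qPochhammer, prod_range_succ', add_zero, mul_comm, qPochhammer]
  congr! 3 with t
  ring

theorem qPochhammer_ne_zero (b a : ℕ) : qPochhammer b a ≠ 0 :=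
  prod_ne_zero_iff.2 fun _ _ ↦ one_sub_X_pow_ne_zero (by omega)

theorem prod_Icc_one_sub_X_pow (b a : ℕ) :
    ∏ t ∈ Icc 1 a, (1 - X ^ (b + t) : ℤ[X]) = qPochhammer b a := by
  rw [← Ico_add_one_right_eq_Icc, prod_Ico_eq_prod_range, add_tsub_cancel_right, qPochhammer]
  simp only [add_assoc]

theorem qBinom_mul_qPochhammer : ∀ a b : ℕ, qBinom a b * qPochhammer 0 a = qPochhammer b a
  | 0, b => by simp [qPochhammer]
  | a + 1, 0 => by simp
  | a + 1, b + 1 => by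
    rw [qBinom_succ_succ, add_mul, mul_assoc (X ^ (a + 1)), qBinom_mul_qPochhammer (a + 1) b,
      qPochhammer_succ 0, ← mul_assoc (qBinom a (b + 1)), qBinom_mul_qPochhammer a (b + 1),
      qPochhammer_succ (b + 1), qPochhammer_succ' b]
    ring

theorem eq_qBinom_of_mul_prod_eq {p : ℤ[X]} {a b : ℕ}
    (h : p * ∏ t ∈ Icc 1 a, (1 - X ^ t) = ∏ t ∈ Icc 1 a, (1 - X ^ (b + t))) : p = qBinom a b := by
  refine mul_right_cancel₀ (qPochhammer_ne_zero 0 a) ?_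
  have h0 := prod_Icc_one_sub_X_pow 0 a
  simp only [zero_add] at h0
  rw [qBinom_mul_qPochhammer, ← h0, h, prod_Icc_one_sub_X_pow]

theorem one_sub_X_pow_mul_qBinom_succ_left (a b : ℕ) :
    (1 - X ^ (a + 1)) * qBinom (a + 1) b = (1 - X ^ (a + b + 1)) * qBinom a b := by
  refine mul_right_cancel₀ (qPochhammer_ne_zero 0 a) ?_
  calc (1 - X ^ (a + 1)) * qBinom (a + 1) b * qPochhammer 0 a
      = qBinom (a + 1) b * qPochhammer 0 (a + 1) := by rw [qPochhammer_succ]; ring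
    _ = (1 - X ^ (a + b + 1)) * qBinom a b * qPochhammer 0 a := by
      rw [qBinom_mul_qPochhammer, mul_assoc, qBinom_mul_qPochhammer, qPochhammer_succ]; ring

theorem one_sub_X_pow_mul_qBinom_succ_right (a b : ℕ) :
    (1 - X ^ (b + 1)) * qBinom a (b + 1) = (1 - X ^ (a + b + 1)) * qBinom a b := by
  refine mul_right_cancel₀ (qPochhammer_ne_zero 0 a) ?_
  rw [mul_assoc, qBinom_mul_qPochhammer, ← qPochhammer_succ', qPochhammer_succ, mul_assoc,
    qBinom_mul_qPochhammer]
  ring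

theorem one_sub_X_pow_mul_one_sub_X_pow_mul_qBinom_succ_succ (a b : ℕ) :
    (1 - X ^ (a + 1)) * (1 - X ^ (b + 1)) * qBinom (a + 1) (b + 1)
      = (1 - X ^ (a + b + 2)) * (1 - X ^ (a + b + 1)) * qBinom a b := by
  linear_combination (1 - X ^ (b + 1)) * one_sub_X_pow_mul_qBinom_succ_left a (b + 1)
    + (1 - X ^ (a + b + 2)) * one_sub_X_pow_mul_qBinom_succ_right a b

theorem qBinom_two_mul (m : ℕ) :
    qBinom 2 m * ((1 - X) * (1 - X ^ 2)) = (1 - X ^ (m + 1)) * (1 - X ^ (m + 2)) := by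
  simpa [qPochhammer, prod_range_succ, add_assoc] using qBinom_mul_qPochhammer 2 m

/-- `qLines a b = [a + b choose a - 1, 2, b - 1]_q` (zero if `a = 0` or `b = 0`), the Poincaré
polynomial of the variety of lines in `G(a, a + b)`. -/
noncomputable def qLines : ℕ → ℕ → ℤ[X]
  | a + 1, b + 1 => qBinom 2 (a + b) * qBinom a b
  | _, _ => 0

theorem qLines_mul (a b : ℕ) :
    qLines a b * ((1 - X) * (1 - X ^ 2)) = (1 - X ^ a) * (1 - X ^ b) * qBinom a b := by
  match a, b with
  | 0, _ => simp [qLines]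
  | _ + 1, 0 => simp [qLines]
  | a + 1, b + 1 =>
    rw [qLines, mul_right_comm, qBinom_two_mul,
      one_sub_X_pow_mul_one_sub_X_pow_mul_qBinom_succ_succ]
    ring

theorem qLines_mem_natCoeffPolys (a b : ℕ) : qLines a b ∈ natCoeffPolys := by
  match a, b with
  | 0, _ => simp [qLines]
  | _ + 1, 0 => simp [qLines]
  | a + 1, b + 1 => exact mul_mem (qBinom_mem_natCoeffPolys _ _) (qBinom_mem_natCoeffPolys _ _)

/-- `poincareDegTwo i j` is the Poincaré polynomial of `M̄₀,₀(G(i + 1, i + j + 2), 2)`. -/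
noncomputable def poincareDegTwo (i j : ℕ) : ℤ[X] :=
  qBinom 2 i * qBinom 2 j * qBinom (i + 1) (j + 1)
    + qBinom 2 (i + j) * (X ^ 3 * qLines i j + X ^ (i + j + 2) * qBinom i j)

theorem poincareDegTwo_mem_natCoeffPolys (i j : ℕ) : poincareDegTwo i j ∈ natCoeffPolys := by
  have hB := qBinom_mem_natCoeffPolys
  have hX := X_mem_natCoeffPolys
  unfold poincareDegTwo
  refine add_mem (mul_mem (mul_mem (hB _ _) (hB _ _)) (hB _ _)) (mul_mem (hB _ _) (add_mem ?_ ?_))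
  · exact mul_mem (pow_mem hX _) (qLines_mem_natCoeffPolys _ _)
  · exact mul_mem (pow_mem hX _) (hB _ _)

theorem poincareDegTwo_mul (i j : ℕ) :
    (1 - X ^ (i + 1)) * (1 - X ^ (j + 1))
        * ((1 + X ^ (i + j + 2)) * (1 + X ^ 3) - X * (1 + X) * (X ^ (i + 1) + X ^ (j + 1)))
        * qBinom (i + 1) (j + 1)
      = poincareDegTwo i j * ((1 - X) ^ 2 * (1 - X ^ 2) ^ 2) := by
  set D : ℤ[X] := (1 - X) * (1 - X ^ 2)
  set An : ℤ[X] := (1 - X ^ (i + j + 1)) * (1 - X ^ (i + j + 2))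
  have hi := qBinom_two_mul i
  have hj := qBinom_two_mul j
  have hn := qBinom_two_mul (i + j)
  have hL := qLines_mul i j
  have hF := one_sub_X_pow_mul_one_sub_X_pow_mul_qBinom_succ_succ i j
  unfold poincareDegTwo
  linear_combination (-qBinom (i + 1) (j + 1) * qBinom 2 j * D) * hi
    - (qBinom (i + 1) (j + 1) * (1 - X ^ (i + 1)) * (1 - X ^ (i + 2))) * hj
    - (D * (X ^ 3 * qLines i j + X ^ (i + j + 2) * qBinom i j)) * hn
    - X ^ 3 * An * hL
    + (X ^ 3 * (1 - X ^ i) * (1 - X ^ j) + X ^ (i + j + 2) * D) * hF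

theorem degree_two_poincare_polynomial_general
    (gb : ℕ → ℕ → Polynomial ℤ)
    (hgb : ∀ m j : ℕ, j ≤ m →
      gb m j * ∏ i ∈ Finset.Icc 1 j, (1 - (X : Polynomial ℤ) ^ i)
        = ∏ i ∈ Finset.Icc 1 j, (1 - (X : Polynomial ℤ) ^ (m - j + i)))
    (n k : ℕ) (hk : 1 ≤ k) (hkn : k ≤ n - 1) :
    ∃ P : Polynomial ℤ,
      (1 - (X : Polynomial ℤ) ^ k) * (1 - (X : Polynomial ℤ) ^ (n - k))
          * ((1 + X ^ n) * (1 + X ^ 3) - X * (1 + X) * (X ^ k + X ^ (n - k)))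
          * gb n k
        = P * ((1 - (X : Polynomial ℤ)) ^ 2 * (1 - X ^ 2) ^ 2)
      ∧ ∀ i : ℕ, 0 ≤ P.coeff i := by
  obtain ⟨i, rfl⟩ : ∃ i, k = i + 1 := ⟨k - 1, by omega⟩
  obtain ⟨j, rfl⟩ : ∃ j, n = i + j + 2 := ⟨n - i - 2, by omega⟩
  have hsub : i + j + 2 - (i + 1) = j + 1 := by omega
  have hgb_eq : gb (i + j + 2) (i + 1) = qBinom (i + 1) (j + 1) :=
    eq_qBinom_of_mul_prod_eq (hsub ▸ hgb (i + j + 2) (i + 1) (by omega))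
  rw [hsub, hgb_eq]
  exact ⟨poincareDegTwo i j, poincareDegTwo_mul i j,
    coeff_nonneg_of_mem_natCoeffPolys (poincareDegTwo_mem_natCoeffPolys i j)⟩

/-- **Theorem 3.2 (degree 2), qualitative form.** For `1 ≤ k ≤ n−1`, the polynomial
`N₂(q) = (1−q^k)(1−q^{n−k})((1+q^n)(1+q³) − q(1+q)(q^k+q^{n−k}))·[n choose k]_q`
is divisible in `ℤ[q]` by `D₂(q) = (1−q)²(1−q²)²`, and the quotient
(the Poincaré polynomial of `M̄₀,₀(G(k,n),2)`) has nonnegative coefficients.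
Here `gb` is the Gaussian binomial coefficient characterized by the product formula. -/
theorem degree_two_poincare_polynomial
    (gb : ℕ → ℕ → Polynomial ℤ)
    (hgb : ∀ m j : ℕ, j ≤ m →
      gb m j * ∏ i ∈ Finset.Icc 1 j, (1 - (X : Polynomial ℤ) ^ i)
        = ∏ i ∈ Finset.Icc 1 j, (1 - (X : Polynomial ℤ) ^ (m - j + i)))
    (hgb0 : ∀ m j : ℕ, m < j → gb m j = 0)
    (n k : ℕ) (hk : 1 ≤ k) (hkn : k ≤ n - 1) :
    ∃ P : Polynomial ℤ,
      (1 - (X : Polynomial ℤ) ^ k) * (1 - (X : Polynomial ℤ) ^ (n - k))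
          * ((1 + X ^ n) * (1 + X ^ 3) - X * (1 + X) * (X ^ k + X ^ (n - k)))
          * gb n k
        = P * ((1 - (X : Polynomial ℤ)) ^ 2 * (1 - X ^ 2) ^ 2)
      ∧ ∀ i : ℕ, 0 ≤ P.coeff i :=
  degree_two_poincare_polynomial_general gb hgb n k hk hkn
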